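/- Let A ∈ ℂ^{m×n}, B ∈ ℂ^{m×p1}, C ∈ ℂ^{m×p2}, D ∈ ℂ^{q1×n}, E ∈ ℂ^{q2×n} be given. Then the matrix equation B·X·D + C·Y·E = A has a solution (X, Y) with X ∈ ℂ^{p1×q1} and Y ∈ ℂ^{p2×q2} if and only if the following four rank equalities hold: r([A C B]) = r([C B]), r([A; D; E]) = r([D; E]), r([A B; E 0]) = r([0 B; E 0]), and r([A C; D 0]) = r([0 C; D 0]). -/

import Mathlib

/-!
Write `A = M + N` with `M = B X D` and `N = C Y E`. A single map `f` factors as `b ∘ x ∘ d`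
exactly when `range f ≤ range b` and `ker d ≤ ker f`, so the equation is solvable iff `A` splits
as `M + N` with `range M ≤ range B`, `ker D ≤ ker M`, `range N ≤ range C`, `ker E ≤ ker N`.
Such a splitting exists iff `range A ≤ range B + range C`, `ker D ∩ ker E ≤ ker A`,
`A (ker E) ≤ range B` and `A (ker D) ≤ range C`, and by rank–nullity these are the four rank
equalities; e.g. `r [A B; E 0] = r E + dim (A (ker E) + range B)`.
-/

open Matrix LinearMap Submodule Module

namespace LinearMap

variable {K V V₁ V₂ W W₁ W₂ : Type*} [Field K] [AddCommGroup V] [Module K V]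
  [AddCommGroup V₁] [Module K V₁] [AddCommGroup V₂] [Module K V₂]
  [AddCommGroup W] [Module K W] [AddCommGroup W₁] [Module K W₁] [AddCommGroup W₂] [Module K W₂]

theorem exists_comp_eq_of_ker_le (d : V →ₗ[K] W₁) (f : V →ₗ[K] W) (h : ker d ≤ ker f) :
    ∃ g : W₁ →ₗ[K] W, g ∘ₗ d = f := by
  obtain ⟨s, hs⟩ := d.rangeRestrict.exists_rightInverse_of_surjective d.range_rangeRestrict
  obtain ⟨g, hg⟩ := (f ∘ₗ s).exists_extend
  refine ⟨g, LinearMap.ext fun v => ?_⟩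
  have hsv : d (s (d.rangeRestrict v)) = d v := congr(Subtype.val ($hs (d.rangeRestrict v)))
  have hker : s (d.rangeRestrict v) - v ∈ ker f := h <| by simp [hsv]
  calc g (d v) = f (s (d.rangeRestrict v)) := congr($hg (d.rangeRestrict v))
    _ = f v := by simpa [sub_eq_zero] using hker

theorem exists_comp_comp_eq (b : V₁ →ₗ[K] W) (d : V →ₗ[K] W₁) (f : V →ₗ[K] W)
    (h_range : range f ≤ range b) (h_ker : ker d ≤ ker f) :
    ∃ x : W₁ →ₗ[K] V₁, b ∘ₗ x ∘ₗ d = f := by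
  set f' := f.codRestrict (range b) fun v => h_range ⟨v, rfl⟩
  obtain ⟨g, hg⟩ := d.exists_comp_eq_of_ker_le f' (by rwa [ker_codRestrict])
  obtain ⟨x, hx⟩ := projective_lifting_property b.rangeRestrict g b.surjective_rangeRestrict
  refine ⟨x, LinearMap.ext fun v => ?_⟩
  calc b (x (d v)) = g (d v) := congr(Subtype.val ($hx (d v)))
    _ = f v := congr(Subtype.val ($hg v))

theorem exists_le_ker_eqOn_of_inf_le_ker (a : V →ₗ[K] W) {N₁ N₂ : Submodule K V}
    {U : Submodule K W} (h_ker : N₁ ⊓ N₂ ≤ ker a) (h_map : N₂.map a ≤ U) :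
    ∃ m : V →ₗ[K] W, range m ≤ U ∧ N₁ ≤ ker m ∧ ∀ v ∈ N₂, m v = a v := by
  obtain ⟨x, hx⟩ := U.subtype.exists_comp_comp_eq (N₁.mkQ ∘ₗ N₂.subtype) (a ∘ₗ N₂.subtype)
    (by rwa [range_subtype, range_comp, range_subtype])
    (fun v hv => h_ker ⟨by simpa using hv, v.2⟩)
  refine ⟨U.subtype ∘ₗ x ∘ₗ N₁.mkQ, ?_, fun v hv => ?_, fun v hv => congr($hx ⟨v, hv⟩)⟩
  · exact (range_comp_le_range _ _).trans (range_subtype U).le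
  · simp [(Submodule.Quotient.mk_eq_zero N₁).mpr hv]

-- Modulo `U₂`, the hypothesis `range c ≤ U₁ ⊔ U₂` says that `c` factors through the image of `U₁`.
theorem exists_range_sub_le_of_range_le_sup (c : V →ₗ[K] W) {S : Submodule K V}
    {U₁ U₂ : Submodule K W} (h_range : range c ≤ U₁ ⊔ U₂) (h_map : S.map c ≤ U₂) :
    ∃ m : V →ₗ[K] W, range m ≤ U₁ ∧ S ≤ ker m ∧ range (c - m) ≤ U₂ := by
  obtain ⟨x, hx⟩ := (U₂.mkQ ∘ₗ U₁.subtype).exists_comp_comp_eq S.mkQ (U₂.mkQ ∘ₗ c)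
    (by
      rw [range_comp, range_comp, range_subtype]
      calc (range c).map U₂.mkQ ≤ (U₁ ⊔ U₂).map U₂.mkQ := map_mono h_range
        _ = U₁.map U₂.mkQ := by rw [Submodule.map_sup, mkQ_map_self, sup_bot_eq])
    (fun v hv => by simpa using h_map (mem_map_of_mem (by rwa [ker_mkQ] at hv)))
  refine ⟨U₁.subtype ∘ₗ x ∘ₗ S.mkQ, ?_, fun v hv => ?_, ?_⟩
  · exact (range_comp_le_range _ _).trans (range_subtype U₁).le
  · simp [(Submodule.Quotient.mk_eq_zero S).mpr hv]
  · rintro _ ⟨v, rfl⟩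
    exact (Submodule.Quotient.eq U₂).mp congr($hx v).symm

/-- `m` is built in two steps: first `0` on `N₁` and `a` on `N₂`, then a correction vanishing on
`N₁ ⊔ N₂` that moves the remaining `U₁`-component of `a`. -/
theorem exists_splitting_of_range_le_sup (a : V →ₗ[K] W) {N₁ N₂ : Submodule K V}
    {U₁ U₂ : Submodule K W} (h_range : range a ≤ U₁ ⊔ U₂) (h_ker : N₁ ⊓ N₂ ≤ ker a)
    (h₁ : N₂.map a ≤ U₁) (h₂ : N₁.map a ≤ U₂) :
    ∃ m : V →ₗ[K] W, range m ≤ U₁ ∧ N₁ ≤ ker m ∧ range (a - m) ≤ U₂ ∧ N₂ ≤ ker (a - m) := by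
  obtain ⟨m₀, hm₀U, hm₀N₁, hm₀N₂⟩ := a.exists_le_ker_eqOn_of_inf_le_ker h_ker h₁
  have hN₁ : ∀ v ∈ N₁, m₀ v = 0 := fun v hv => hm₀N₁ hv
  have hN₂ : ∀ v ∈ N₂, (a - m₀) v = 0 := fun v hv => by simp [hm₀N₂ v hv]
  obtain ⟨m₁, hm₁U, hm₁N, hm₁c⟩ := (a - m₀).exists_range_sub_le_of_range_le_sup
    (S := N₁ ⊔ N₂) (U₁ := U₁) (U₂ := U₂)
    (by
      rintro _ ⟨v, rfl⟩
      exact sub_mem (h_range ⟨v, rfl⟩) (Submodule.mem_sup_left (hm₀U ⟨v, rfl⟩)))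
    (by
      rw [Submodule.map_sup]
      refine sup_le ?_ ?_ <;> rintro _ ⟨v, hv, rfl⟩
      · simpa [hN₁ v hv] using h₂ ⟨v, hv, rfl⟩
      · simp [hN₂ v hv])
  refine ⟨m₀ + m₁, (range_add_le _ _).trans (sup_le hm₀U hm₁U), fun v hv => ?_,
    by rwa [← sub_sub], fun v hv => ?_⟩
  · simp [hN₁ v hv, mem_ker.mp (hm₁N (Submodule.mem_sup_left hv))]
  · simpa [sub_sub, mem_ker.mp (hm₁N (Submodule.mem_sup_right hv))] using
      congr($(hN₂ v hv) - m₁ v)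

theorem exists_comp_comp_add_comp_comp_eq_iff (a : V →ₗ[K] W) (b : V₁ →ₗ[K] W)
    (c : V₂ →ₗ[K] W) (d : V →ₗ[K] W₁) (e : V →ₗ[K] W₂) :
    (∃ (x : W₁ →ₗ[K] V₁) (y : W₂ →ₗ[K] V₂), b ∘ₗ x ∘ₗ d + c ∘ₗ y ∘ₗ e = a) ↔
      range a ≤ range b ⊔ range c ∧ ker d ⊓ ker e ≤ ker a ∧ (ker e).map a ≤ range b ∧
        (ker d).map a ≤ range c := by
  constructor
  · rintro ⟨x, y, rfl⟩
    refine ⟨?_, ?_, ?_, ?_⟩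
    · rintro _ ⟨v, rfl⟩
      exact Submodule.add_mem_sup ⟨x (d v), rfl⟩ ⟨y (e v), rfl⟩
    · rintro v ⟨hd, he⟩
      simp [mem_ker.mp hd, mem_ker.mp he]
    · rintro _ ⟨v, hv, rfl⟩
      exact ⟨x (d v), by simp [mem_ker.mp hv]⟩
    · rintro _ ⟨v, hv, rfl⟩
      exact ⟨y (e v), by simp [mem_ker.mp hv]⟩
  · rintro ⟨h_range, h_ker, hb, hc⟩
    obtain ⟨m, hmb, hmd, hmc, hme⟩ := a.exists_splitting_of_range_le_sup h_range h_ker hb hc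
    obtain ⟨x, rfl⟩ := b.exists_comp_comp_eq d m hmb hmd
    obtain ⟨y, hy⟩ := c.exists_comp_comp_eq e _ hmc hme
    exact ⟨x, y, by rw [hy, add_sub_cancel]⟩

end LinearMap

namespace Submodule

variable {K V W : Type*} [Field K] [AddCommGroup V] [Module K V] [AddCommGroup W] [Module K W]
  [FiniteDimensional K V]

theorem finrank_sup_eq_finrank_right_iff {p q : Submodule K V} :
    finrank K ↥(p ⊔ q) = finrank K q ↔ p ≤ q := by
  rw [← sup_eq_right]
  exact ⟨fun h => (eq_of_le_of_finrank_eq le_sup_right h.symm).symm, fun h => by rw [h]⟩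

theorem finrank_map_add_finrank_inf_ker (f : V →ₗ[K] W) (p : Submodule K V) :
    finrank K ↥(p.map f) + finrank K ↥(p ⊓ ker f) = finrank K p := by
  have h := (f.domRestrict p).finrank_range_add_finrank_ker
  rwa [range_domRestrict, ker_domRestrict, ← finrank_map_subtype_eq, map_comap_subtype] at h

end Submodule

namespace Matrix

variable {K m n p p₂ q q₂ : Type*} [Field K] [Fintype n]

theorem ker_mulVecLin_fromRows (A : Matrix m n K) (M : Matrix p n K) :
    ker (fromRows A M).mulVecLin = ker A.mulVecLin ⊓ ker M.mulVecLin := by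
  ext v
  simp [funext_iff, Sum.forall]

theorem rank_fromRows (A : Matrix m n K) (M : Matrix p n K) :
    (fromRows A M).rank = M.rank + finrank K ↥((ker M.mulVecLin).map A.mulVecLin) := by
  have h₁ := (fromRows A M).mulVecLin.finrank_range_add_finrank_ker
  have h₂ := M.mulVecLin.finrank_range_add_finrank_ker
  have h₃ := (ker M.mulVecLin).finrank_map_add_finrank_inf_ker A.mulVecLin
  rw [ker_mulVecLin_fromRows, inf_comm] at h₁
  unfold rank
  omega

theorem rank_fromRows_eq_rank_right_iff (A : Matrix m n K) (M : Matrix p n K) :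
    (fromRows A M).rank = M.rank ↔ ker M.mulVecLin ≤ ker A.mulVecLin := by
  rw [rank_fromRows, add_eq_left, Submodule.finrank_eq_zero, le_ker_iff_map]

variable [Fintype p]

theorem range_mulVecLin_fromCols (A : Matrix m n K) (B : Matrix m p K) :
    range (fromCols A B).mulVecLin = range A.mulVecLin ⊔ range B.mulVecLin := by
  ext y
  simp only [mem_range, Submodule.mem_sup]
  constructor
  · rintro ⟨v, rfl⟩
    exact ⟨_, ⟨v ∘ Sum.inl, rfl⟩, _, ⟨v ∘ Sum.inr, rfl⟩, (fromCols_mulVec A B v).symm⟩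
  · rintro ⟨_, ⟨v₁, rfl⟩, _, ⟨v₂, rfl⟩, rfl⟩
    exact ⟨Sum.elim v₁ v₂, fromCols_mulVec_sumElim A B v₁ v₂⟩

theorem map_mulVecLin_fromCols_ker_fromCols_zero (A : Matrix m n K) (B : Matrix m p K)
    (E : Matrix q n K) :
    (ker (fromCols E (0 : Matrix q p K)).mulVecLin).map (fromCols A B).mulVecLin =
      (ker E.mulVecLin).map A.mulVecLin ⊔ range B.mulVecLin := by
  ext y
  simp only [Submodule.mem_map, mem_ker, Submodule.mem_sup, mem_range]
  constructor
  · rintro ⟨v, hv, rfl⟩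
    exact ⟨_, ⟨v ∘ Sum.inl, by simpa using hv, rfl⟩, _, ⟨v ∘ Sum.inr, rfl⟩,
      (fromCols_mulVec A B v).symm⟩
  · rintro ⟨_, ⟨v₁, hv₁, rfl⟩, _, ⟨v₂, rfl⟩, rfl⟩
    exact ⟨Sum.elim v₁ v₂, by simpa [fromCols_mulVec_sumElim] using hv₁,
      fromCols_mulVec_sumElim A B v₁ v₂⟩

theorem rank_fromCols_eq_rank_right_iff [Fintype m] (A : Matrix m n K) (M : Matrix m p K) :
    (fromCols A M).rank = M.rank ↔ range A.mulVecLin ≤ range M.mulVecLin := by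
  rw [rank, rank, range_mulVecLin_fromCols, Submodule.finrank_sup_eq_finrank_right_iff]

theorem rank_fromBlocks_zero₂₂_eq_iff [Fintype m] (A : Matrix m n K) (B : Matrix m p K)
    (E : Matrix q n K) :
    (fromBlocks A B E 0).rank = (fromBlocks 0 B E 0).rank ↔
      (ker E.mulVecLin).map A.mulVecLin ≤ range B.mulVecLin := by
  rw [← fromRows_fromCols_eq_fromBlocks, ← fromRows_fromCols_eq_fromBlocks, rank_fromRows,
    rank_fromRows, add_right_inj, map_mulVecLin_fromCols_ker_fromCols_zero,
    map_mulVecLin_fromCols_ker_fromCols_zero, mulVecLin_zero, Submodule.map_zero, bot_sup_eq,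
    Submodule.finrank_sup_eq_finrank_right_iff]

variable [Fintype p₂] [Fintype q] [Fintype q₂] [DecidableEq n] [DecidableEq q] [DecidableEq q₂]

theorem exists_mul_mul_add_mul_mul_eq_iff (A : Matrix m n K) (B : Matrix m p K)
    (C : Matrix m p₂ K) (D : Matrix q n K) (E : Matrix q₂ n K) :
    (∃ (X : Matrix p q K) (Y : Matrix p₂ q₂ K), B * X * D + C * Y * E = A) ↔
      ∃ (x : (q → K) →ₗ[K] p → K) (y : (q₂ → K) →ₗ[K] p₂ → K),
        B.mulVecLin ∘ₗ x ∘ₗ D.mulVecLin + C.mulVecLin ∘ₗ y ∘ₗ E.mulVecLin = A.mulVecLin := by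
  rw [toLin'.surjective.exists]
  refine exists_congr fun X => ?_
  rw [toLin'.surjective.exists]
  refine exists_congr fun Y => ?_
  rw [← toLin'.injective.eq_iff]
  simp only [toLin'_apply', mulVecLin_add, mulVecLin_mul, comp_assoc]

end Matrix

/-- Solvability of the matrix equation `B*X*D + C*Y*E = A`. -/
theorem solvable_BXD_CYE (m n p1 p2 q1 q2 : ℕ)
    (A : Matrix (Fin m) (Fin n) ℂ) (B : Matrix (Fin m) (Fin p1) ℂ)
    (C : Matrix (Fin m) (Fin p2) ℂ) (D : Matrix (Fin q1) (Fin n) ℂ)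
    (E : Matrix (Fin q2) (Fin n) ℂ) :
    (∃ (X : Matrix (Fin p1) (Fin q1) ℂ) (Y : Matrix (Fin p2) (Fin q2) ℂ),
        B * X * D + C * Y * E = A) ↔
      ((fromCols A (fromCols C B)).rank = (fromCols C B).rank ∧
       (fromRows A (fromRows D E)).rank = (fromRows D E).rank ∧
       (fromBlocks A B E 0).rank = (fromBlocks 0 B E 0).rank ∧
       (fromBlocks A C D 0).rank = (fromBlocks 0 C D 0).rank) := by
  rw [exists_mul_mul_add_mul_mul_eq_iff, LinearMap.exists_comp_comp_add_comp_comp_eq_iff,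
    rank_fromCols_eq_rank_right_iff, range_mulVecLin_fromCols, sup_comm (range C.mulVecLin),
    rank_fromRows_eq_rank_right_iff, ker_mulVecLin_fromRows, rank_fromBlocks_zero₂₂_eq_iff,
    rank_fromBlocks_zero₂₂_eq_iff]
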